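/- arXiv:2511.16387 — 2 statements merged into one kernel-verified Lean document; each statement's English description precedes it below -/
import Mathlib

section
/- Let ζ_{1,j} ∈ L²(∂D) satisfy the recursion: ∫_{∂D}ζ_{1,j} = t_j, (1/(2π))t_{j+1} + τ t_j + S_D[ζ_{1,j}] = 0 for j ≥ 1, where the solution operator has norm bound ‖ζ_{1,j}‖_{L²} + |(1/(2π))t_{j+1} + τ t_j| ≤ C|t_j|. Then for all j ≥ 1: ‖ζ_{1,j}‖_{L²(∂D)} ≤ C(2π(C+|τ|))^{j−1}|t₁| and |t_{j+1}| ≤ (2π(C+|τ|))^j |t₁|. Consequently, if |2π(C+|τ|)/ln k| < 1, the series ζ_{1,0} + Σ_{j≥1} (ln k)^{-j} ζ_{1,j} converges in L²(∂D). -/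
/-! The recursion gives `‖t (j+1)‖ ≤ 2π(C + ‖τ‖) ‖t j‖`, so `‖t j‖` and hence `‖ζ j‖ ≤ C ‖t j‖`
grow at most geometrically with ratio `2π(C + ‖τ‖)`; once `‖(ln k)⁻¹‖` times this ratio is
below `1`, the series is dominated by a convergent geometric series. -/

theorem norm_le_mul_of_norm_inv_mul_add_le {𝕜 : Type*} [NormedDivisionRing 𝕜] {c x y : 𝕜}
    {M : ℝ} (hc : c ≠ 0) (h : ‖c⁻¹ * x + y‖ ≤ M) : ‖x‖ ≤ ‖c‖ * (M + ‖y‖) :=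
  calc ‖x‖ = ‖c * (c⁻¹ * x + y) - c * y‖ := by
        rw [mul_add, mul_inv_cancel_left₀ hc, add_sub_cancel_right]
    _ ≤ ‖c‖ * ‖c⁻¹ * x + y‖ + ‖c‖ * ‖y‖ := by
      grw [norm_sub_le, norm_mul, norm_mul]
    _ ≤ ‖c‖ * (M + ‖y‖) := by grw [h, mul_add]

theorem summable_pow_smul_of_norm_le_geometric {𝕜 E : Type*} [NormedDivisionRing 𝕜]
    [NormedAddCommGroup E] [Module 𝕜 E] [NormSMulClass 𝕜 E] [CompleteSpace E]
    {w : 𝕜} {f : ℕ → E} {K B : ℝ} (hB : 0 ≤ B) (hf : ∀ j, ‖f j‖ ≤ K * B ^ j)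
    (hw : ‖w‖ * B < 1) : Summable fun j => w ^ j • f j := by
  refine .of_norm_bounded ((summable_geometric_of_lt_one (by positivity) hw).mul_left K) ?_
  intro j
  calc ‖w ^ j • f j‖ = ‖w‖ ^ j * ‖f j‖ := by rw [norm_smul, norm_pow]
    _ ≤ ‖w‖ ^ j * (K * B ^ j) := by gcongr; exact hf j
    _ = K * (‖w‖ * B) ^ j := by ring

theorem norm_succ_le_of_norm_recursion_le {t : ℕ → ℂ} {τ : ℂ} {C : ℝ} {j : ℕ}
    (h : ‖((2 * Real.pi)⁻¹ : ℂ) * t (j + 1) + τ * t j‖ ≤ C * ‖t j‖) :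
    ‖t (j + 1)‖ ≤ 2 * Real.pi * (C + ‖τ‖) * ‖t j‖ := by
  have h2π : (2 * Real.pi : ℂ) ≠ 0 := by exact_mod_cast Real.two_pi_pos.ne'
  have hnorm : ‖(2 * Real.pi : ℂ)‖ = 2 * Real.pi := by
    rw [norm_mul, Complex.norm_two, Complex.norm_real, Real.norm_of_nonneg Real.pi_pos.le]
  calc ‖t (j + 1)‖ ≤ ‖(2 * Real.pi : ℂ)‖ * (C * ‖t j‖ + ‖τ * t j‖) :=
        norm_le_mul_of_norm_inv_mul_add_le h2π h
    _ = 2 * Real.pi * (C + ‖τ‖) * ‖t j‖ := by rw [hnorm, norm_mul]; ring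

/-- Iterative bounds for the expansion coefficients:
if `‖ζ_j‖ + |(1/(2π)) t_{j+1} + τ t_j| ≤ C |t_j|` for `j ≥ 1`, then
`‖ζ_j‖ ≤ C (2π(C+|τ|))^{j−1} |t₁|` and `|t_{j+1}| ≤ (2π(C+|τ|))^j |t₁|`;
consequently, if `|2π(C+|τ|)/ln k| < 1`, the series
`Σ_{j≥1} (ln k)^{-j} ζ_j` converges in `L²(∂D)`. -/
theorem stmt_12
    (X : Type*) [NormedAddCommGroup X] [NormedSpace ℂ X] [CompleteSpace X]
    (ζ : ℕ → X) (t : ℕ → ℂ) (C : ℝ) (hC : 0 < C) (τ k : ℂ)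
    (hbound : ∀ j : ℕ, 1 ≤ j →
      ‖ζ j‖ + ‖((2 * Real.pi)⁻¹ : ℂ) * t (j + 1) + τ * t j‖
        ≤ C * ‖t j‖) :
    (∀ j : ℕ, 1 ≤ j →
      ‖ζ j‖ ≤ C * (2 * Real.pi * (C + ‖τ‖)) ^ (j - 1) * ‖t 1‖
      ∧ ‖t (j + 1)‖
          ≤ (2 * Real.pi * (C + ‖τ‖)) ^ j * ‖t 1‖)
    ∧ (‖(2 * Real.pi * (C + ‖τ‖) : ℂ) / Complex.log k‖ < 1 →
        Summable (fun j : ℕ => ((Complex.log k)⁻¹ ^ (j + 1)) • ζ (j + 1))) := by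
  set B : ℝ := 2 * Real.pi * (C + ‖τ‖) with hB_def
  have hB : 0 ≤ B := by positivity
  have ht : ∀ j, ‖t (j + 1)‖ ≤ B ^ j * ‖t 1‖ := fun j =>
    le_geom (u := fun k => ‖t (k + 1)‖) hB j fun k _ =>
      norm_succ_le_of_norm_recursion_le
        ((le_add_of_nonneg_left (norm_nonneg _)).trans (hbound (k + 1) (by omega)))
  have hζ : ∀ j, ‖ζ (j + 1)‖ ≤ C * B ^ j * ‖t 1‖ := fun j =>
    calc ‖ζ (j + 1)‖ ≤ C * ‖t (j + 1)‖ :=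
          (le_add_of_nonneg_right (norm_nonneg _)).trans (hbound (j + 1) (by omega))
      _ ≤ C * B ^ j * ‖t 1‖ := by grw [ht j, mul_assoc]
  refine ⟨fun j hj => ?_, fun hk => ?_⟩
  · obtain ⟨m, rfl⟩ : ∃ m, j = m + 1 := ⟨j - 1, by omega⟩
    exact ⟨hζ m, ht (m + 1)⟩
  · have hB_norm : ‖(Complex.log k)⁻¹‖ * B < 1 := by
      have hB_cast : ((B : ℝ) : ℂ) = (2 * Real.pi * (C + ‖τ‖) : ℂ) := by push_cast [hB_def]; rfl
      rwa [← hB_cast, norm_div, Complex.norm_real, Real.norm_of_nonneg hB, div_eq_inv_mul,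
        ← norm_inv] at hk
    simp_rw [pow_succ', mul_smul]
    exact (summable_pow_smul_of_norm_le_geometric hB (fun j => by grw [hζ j, mul_right_comm])
      hB_norm).const_smul _
end

section
/- Let F : (0, T] → [0, ∞) be nondecreasing and suppose there are constants c₀ > 0, A ≥ 0 such that for all 0 < t < s ≤ T: F(t) ≤ (1/4 + c₀ δ²/(s−t)²) F(s) + A(s−t)² s, where δ > 0 satisfies δ ≤ 1. Then with t_i = δ + 2√(c₀) i δ and m₀ = ⌈1/(4√(c₀ δ))⌉ + 1, iterating gives F(δ) ≤ (1/2)^{m₀} F(t_{m₀}) + C A δ³ for a constant C depending only on c₀, provided t_{m₀} ≤ T. -/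
/-!
Along the grid `tᵢ = δ + 2√c₀ i δ` consecutive points are `2√c₀ δ` apart, so the coefficient
`1/4 + c₀δ²/(s-t)²` is exactly `1/2`; since `tᵢ₊₁ ≤ (1 + 2√c₀)(i + 1)δ`, the additive term is at
most `K A δ³ (i + 1)` with `K = 4c₀(1 + 2√c₀)`. Unrolling `m` steps leaves `(1/2)^m F(tₘ)` plus
`K A δ³ ∑ (i + 1) 2⁻ⁱ ≤ 4 K A δ³`.
-/

open Finset

theorem le_pow_mul_add_sum_of_le_mul_add {u b : ℕ → ℝ} {r : ℝ} (hr : 0 ≤ r) {m : ℕ}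
    (h : ∀ i < m, u i ≤ r * u (i + 1) + b i) :
    u 0 ≤ r ^ m * u m + ∑ i ∈ range m, r ^ i * b i := by
  induction m with
  | zero => simp
  | succ m ih =>
    have hstep := mul_le_mul_of_nonneg_left (h m m.lt_succ_self) (pow_nonneg hr m)
    calc u 0 ≤ r ^ m * u m + ∑ i ∈ range m, r ^ i * b i :=
          ih fun i hi => h i (Nat.lt_succ_of_lt hi)
      _ ≤ r ^ m * (r * u (m + 1) + b m) + ∑ i ∈ range m, r ^ i * b i := by gcongr
      _ = r ^ (m + 1) * u (m + 1) + ∑ i ∈ range (m + 1), r ^ i * b i := by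
          rw [sum_range_succ]; ring

theorem hasSum_succ_mul_half_pow : HasSum (fun n : ℕ => ((n : ℝ) + 1) * (1 / 2) ^ n) 4 := by
  have hn := hasSum_coe_mul_geometric_of_norm_lt_one (𝕜 := ℝ) (r := 1 / 2) (by norm_num)
  have h := hn.add hasSum_geometric_two
  rw [show (1 / 2 : ℝ) / (1 - 1 / 2) ^ 2 + 2 = 4 by norm_num] at h
  simpa only [add_mul, one_mul] using h

theorem sum_range_succ_mul_half_pow_le_four (m : ℕ) :
    ∑ i ∈ range m, ((i : ℝ) + 1) * (1 / 2) ^ i ≤ 4 :=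
  sum_le_hasSum _ (fun i _ => by positivity) hasSum_succ_mul_half_pow

theorem le_half_mul_add_of_sub_eq {c₀ δ A t s : ℝ} {F : ℝ → ℝ} (hc₀ : 0 < c₀) (hδ : 0 < δ)
    (hst : s - t = 2 * √c₀ * δ)
    (hrec : F t ≤ (1 / 4 + c₀ * δ ^ 2 / (s - t) ^ 2) * F s + A * (s - t) ^ 2 * s) :
    F t ≤ 1 / 2 * F s + 4 * c₀ * A * δ ^ 2 * s := by
  have hsq : (s - t) ^ 2 = 4 * c₀ * δ ^ 2 := by
    rw [hst, mul_pow, mul_pow, Real.sq_sqrt hc₀.le]; ring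
  have hcoef : c₀ * δ ^ 2 / (s - t) ^ 2 = 1 / 4 := by
    rw [hsq]; field_simp
  rw [hcoef, hsq] at hrec
  linarith

theorem le_half_pow_mul_add_of_le_quarter_add {c₀ A δ T : ℝ} {F : ℝ → ℝ}
    (hc₀ : 0 < c₀) (hA : 0 ≤ A) (hδ : 0 < δ)
    (hrec : ∀ t s : ℝ, 0 < t → t < s → s ≤ T →
      F t ≤ (1 / 4 + c₀ * δ ^ 2 / (s - t) ^ 2) * F s + A * (s - t) ^ 2 * s)
    {m : ℕ} (hm : δ + 2 * √c₀ * m * δ ≤ T) :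
    F δ ≤ (1 / 2) ^ m * F (δ + 2 * √c₀ * m * δ) + 4 * (4 * c₀ * (1 + 2 * √c₀)) * A * δ ^ 3 := by
  set K := 4 * c₀ * (1 + 2 * √c₀)
  set t : ℕ → ℝ := fun i => δ + 2 * √c₀ * i * δ with ht
  have hgap : ∀ i : ℕ, t (i + 1) - t i = 2 * √c₀ * δ := fun i => by
    simp only [ht]; push_cast; ring
  have hpos : ∀ i, 0 < t i := fun i => by simp only [ht]; positivity
  have hle_T : ∀ i ≤ m, t i ≤ T := fun i hi => le_trans (by simp only [ht]; gcongr) hm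
  have hgrid : ∀ i : ℕ, t (i + 1) ≤ (1 + 2 * √c₀) * (i + 1) * δ := fun i => by
    simp only [ht]; push_cast
    nlinarith [mul_nonneg (Nat.cast_nonneg (α := ℝ) i) hδ.le]
  have hstep : ∀ i < m, F (t i) ≤ 1 / 2 * F (t (i + 1)) + K * A * δ ^ 3 * (i + 1) := by
    intro i hi
    have h := le_half_mul_add_of_sub_eq hc₀ hδ (hgap i)
      (hrec _ _ (hpos i) (by linarith [hgap i, show 0 < 2 * √c₀ * δ by positivity]) (hle_T _ hi))
    have hadd : 4 * c₀ * A * δ ^ 2 * t (i + 1) ≤ K * A * δ ^ 3 * (i + 1) := by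
      calc 4 * c₀ * A * δ ^ 2 * t (i + 1)
          ≤ 4 * c₀ * A * δ ^ 2 * ((1 + 2 * √c₀) * (i + 1) * δ) := by gcongr; exact hgrid i
        _ = K * A * δ ^ 3 * (i + 1) := by ring
    linarith
  have hiter := le_pow_mul_add_sum_of_le_mul_add (u := fun i => F (t i)) (by norm_num) hstep
  have hsum : ∑ i ∈ range m, (1 / 2 : ℝ) ^ i * (K * A * δ ^ 3 * (i + 1)) ≤ 4 * K * A * δ ^ 3 := by
    calc ∑ i ∈ range m, (1 / 2 : ℝ) ^ i * (K * A * δ ^ 3 * (i + 1))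
        = K * A * δ ^ 3 * ∑ i ∈ range m, ((i : ℝ) + 1) * (1 / 2) ^ i := by
          rw [mul_sum]; congr 1 with i; ring
      _ ≤ K * A * δ ^ 3 * 4 := by gcongr; exact sum_range_succ_mul_half_pow_le_four m
      _ = 4 * K * A * δ ^ 3 := by ring
  have ht0 : t 0 = δ := by simp [ht]
  simp only [ht0] at hiter
  linarith

/-- Abstract iteration lemma: if `F : (0,T] → [0,∞)` is nondecreasing and
`F(t) ≤ (1/4 + c₀δ²/(s−t)²) F(s) + A(s−t)² s` for all `0 < t < s ≤ T`, with
`0 < δ ≤ 1`, then with `t_i = δ + 2√c₀ i δ` and `m₀ = ⌈1/(4√(c₀δ))⌉ + 1`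
(assuming `t_{m₀} ≤ T`), iteration gives
`F(δ) ≤ (1/2)^{m₀} F(t_{m₀}) + C A δ³`, with `C` depending only on `c₀`. -/
theorem stmt_19 (c₀ : ℝ) (hc₀ : 0 < c₀) :
    ∃ C : ℝ, 0 < C ∧
      ∀ (T A δ : ℝ) (F : ℝ → ℝ), 0 < T → 0 ≤ A → 0 < δ → δ ≤ 1 →
        (∀ x ∈ Set.Ioc (0 : ℝ) T, 0 ≤ F x) →
        MonotoneOn F (Set.Ioc (0 : ℝ) T) →
        (∀ t s : ℝ, 0 < t → t < s → s ≤ T →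
          F t ≤ (1 / 4 + c₀ * δ ^ 2 / (s - t) ^ 2) * F s + A * (s - t) ^ 2 * s) →
        δ + 2 * Real.sqrt c₀ * ((⌈1 / (4 * Real.sqrt (c₀ * δ))⌉₊ : ℝ) + 1) * δ ≤ T →
        F δ ≤ (1 / 2 : ℝ) ^ (⌈1 / (4 * Real.sqrt (c₀ * δ))⌉₊ + 1) *
            F (δ + 2 * Real.sqrt c₀ * ((⌈1 / (4 * Real.sqrt (c₀ * δ))⌉₊ : ℝ) + 1) * δ)
          + C * A * δ ^ 3 := by
  refine ⟨4 * (4 * c₀ * (1 + 2 * √c₀)), by positivity, ?_⟩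
  intro T A δ F _ hA hδ _ _ _ hrec hm
  exact_mod_cast le_half_pow_mul_add_of_le_quarter_add hc₀ hA hδ hrec (m := _ + 1)
    (by exact_mod_cast hm)
end
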